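/- Let q be the watermarked distribution obtained from p by adding logit bias δ > 0 to tokens in a green set G and renormalizing. Then KL(q‖p) ≤ δ, i.e., the distortion introduced by watermarking is at most the logit bias. -/
import Mathlib


open Finset

theorem watermark_kl_le_delta {V : Type*} [Fintype V] [DecidableEq V]
    (p : V → ℝ) (hp : ∀ k, 0 < p k) (hsum : ∑ k, p k = 1)
    (G : Finset V) (δ : ℝ) (hδ : 0 < δ) (q : V → ℝ)
    (hq : ∀ k, q k = p k * Real.exp (δ * (if k ∈ G then 1 else 0)) /
      ∑ j, p j * Real.exp (δ * (if j ∈ G then 1 else 0))) :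
    (∑ k, q k * Real.log (q k / p k)) ≤ δ := by
  have hne : (Finset.univ : Finset V).Nonempty := by
    by_contra h
    rw [Finset.not_nonempty_iff_eq_empty] at h
    rw [h] at hsum
    simp at hsum
  set Z : ℝ := ∑ j, p j * Real.exp (δ * (if j ∈ G then 1 else 0)) with hZ
  have hZpos : 0 < Z :=
    Finset.sum_pos (fun j _ => mul_pos (hp j) (Real.exp_pos _)) hne
  have hZ1 : 1 ≤ Z := by
    calc (1:ℝ) = ∑ k, p k := hsum.symm
    _ ≤ Z := by
        apply Finset.sum_le_sum
        intro j _
        nth_rewrite 1 [← mul_one (p j)]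
        apply mul_le_mul_of_nonneg_left _ (hp j).le
        rw [← Real.exp_zero]
        apply Real.exp_le_exp.2
        positivity
  have hlogZ : 0 ≤ Real.log Z := Real.log_nonneg hZ1
  have hqnn : ∀ k, 0 ≤ q k := fun k => by
    rw [hq k]
    exact div_nonneg (mul_nonneg (hp k).le (Real.exp_pos _).le) hZpos.le
  have hqsum : ∑ k, q k = 1 := by
    simp only [hq]
    rw [← Finset.sum_div, ← hZ, div_self hZpos.ne']
  have hterm : ∀ k, q k * Real.log (q k / p k) =
      q k * (δ * (if k ∈ G then 1 else 0)) - q k * Real.log Z := by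
    intro k
    have h1 : q k / p k = Real.exp (δ * (if k ∈ G then 1 else 0)) / Z := by
      rw [hq k, mul_div_assoc, mul_comm, mul_div_assoc, div_self (hp k).ne', mul_one]
    rw [h1, Real.log_div (Real.exp_ne_zero _) hZpos.ne', Real.log_exp, mul_sub]
  calc (∑ k, q k * Real.log (q k / p k))
      = (∑ k, q k * (δ * (if k ∈ G then 1 else 0))) - (∑ k, q k) * Real.log Z := by
        rw [Finset.sum_mul, ← Finset.sum_sub_distrib]
        exact Finset.sum_congr rfl fun k _ => hterm k
    _ ≤ (∑ k, q k * δ) - 0 := by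
        apply sub_le_sub
        · apply Finset.sum_le_sum
          intro k _
          apply mul_le_mul_of_nonneg_left _ (hqnn k)
          have h2 : (if k ∈ G then (1:ℝ) else 0) ≤ 1 := by split <;> norm_num
          nth_rewrite 2 [← mul_one δ]
          exact mul_le_mul_of_nonneg_left h2 hδ.le
        · rw [hqsum, one_mul]; exact hlogZ
    _ = δ := by rw [sub_zero, ← Finset.sum_mul, hqsum, one_mul]
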